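/- Let n ≥ 2 and let H be a complex Hadamard matrix of order n all of whose entries lie in the set {1, a} for some complex number a of absolute value 1 with a ≠ −1. Then every row of H contains the same number of entries equal to 1; in particular H is regular. -/

import Mathlib

open Matrix

/-- `H` is a complex Hadamard matrix: unimodular entries and `H Hᴴ = n • I`. -/
def IsCHadamard {n : Type*} [Fintype n] [DecidableEq n] (H : Matrix n n ℂ) : Prop :=
  (∀ i j, ‖H i j‖ = 1) ∧
    H * H.conjTranspose = (Fintype.card n : ℂ) • 1

/-- A complex Hadamard matrix is regular if the absolute value of the sum of
the entries is the same in every row. -/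
def IsRegularCH {n : Type*} [Fintype n] (H : Matrix n n ℂ) : Prop :=
  ∀ i i', ‖∑ j, H i j‖ = ‖∑ j, H i' j‖

/-!
For rows `u, v` with entries in `{1, a}` one has `Im (u_j * conj v_j) = Im u_j - Im v_j`
termwise, so orthogonality of two rows of `H` says their row sums have the same imaginary part.
A row with `c` entries equal to `1` sums to `n a + c (1 - a)`, whose imaginary part
`(n - c) Im a` determines `c` unless `a` is real, i.e. `a = 1`. Equal counts then give equal
row sums.
-/

open ComplexConjugate

theorem Complex.eq_one_of_norm_eq_one_of_im_eq_zero {a : ℂ} (ha : ‖a‖ = 1) (him : a.im = 0)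
    (ha1 : a ≠ -1) : a = 1 := by
  have hre : a.re ^ 2 = 1 := by
    have := Complex.normSq_eq_norm_sq a
    rw [ha, Complex.normSq_apply, him] at this
    nlinarith
  rcases mul_eq_zero.mp (show (a.re - 1) * (a.re + 1) = 0 by linear_combination hre) with h | h
  · exact Complex.ext (by simpa [sub_eq_zero] using h) (by simpa using him)
  · exact absurd (Complex.ext (by simp; linarith) (by simpa using him)) ha1

section PairValued

variable {ι : Type*} [Fintype ι] {a : ℂ}

theorem im_mul_conj_eq_im_sub_im {z w : ℂ} (hz : z = 1 ∨ z = a) (hw : w = 1 ∨ w = a) :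
    (z * conj w).im = z.im - w.im := by
  rcases hz with rfl | rfl <;> rcases hw with rfl | rfl <;> simp [Complex.mul_im]; ring

theorem im_sum_mul_conj_eq_im_sum_sub_im_sum {u v : ι → ℂ} (hu : ∀ j, u j = 1 ∨ u j = a)
    (hv : ∀ j, v j = 1 ∨ v j = a) :
    (∑ j, u j * conj (v j)).im = (∑ j, u j).im - (∑ j, v j).im := by
  simp only [Complex.im_sum, ← Finset.sum_sub_distrib]
  exact Finset.sum_congr rfl fun j _ => im_mul_conj_eq_im_sub_im (hu j) (hv j)

theorem sum_eq_of_forall_eq_one_or_eq {u : ι → ℂ} (hu : ∀ j, u j = 1 ∨ u j = a) :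
    ∑ j, u j = Fintype.card ι * a + (Finset.univ.filter fun j => u j = 1).card * (1 - a) := by
  have h : ∀ j, u j = a + if u j = 1 then 1 - a else 0 := fun j => by
    split_ifs with h1
    · rw [h1]; ring
    · rw [add_zero]; exact (hu j).resolve_left h1
  rw [Finset.sum_congr rfl fun j _ => h j, Finset.sum_add_distrib, ← Finset.sum_filter,
    Finset.sum_const, Finset.sum_const, Finset.card_univ, nsmul_eq_mul, nsmul_eq_mul]

end PairValued

namespace IsCHadamard

variable {ι : Type*} [Fintype ι] [DecidableEq ι] {H : Matrix ι ι ℂ}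

theorem im_sum_mul_conj_eq_zero (hH : IsCHadamard H) (i i' : ι) :
    (∑ j, H i j * conj (H i' j)).im = 0 := by
  have h := congrFun (congrFun hH.2 i) i'
  simp only [mul_apply, conjTranspose_apply, Matrix.smul_apply, one_apply] at h
  rw [← Complex.star_def, h]
  split_ifs <;> simp

theorem card_filter_eq_one_eq {a : ℂ} (hH : IsCHadamard H)
    (hent : ∀ i j, H i j = 1 ∨ H i j = a) (him : a.im ≠ 0) (i i' : ι) :
    (Finset.univ.filter fun j => H i j = 1).card =
      (Finset.univ.filter fun j => H i' j = 1).card := by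
  have h := im_sum_mul_conj_eq_im_sum_sub_im_sum (hent i) (hent i')
  rw [hH.im_sum_mul_conj_eq_zero, sum_eq_of_forall_eq_one_or_eq (hent i),
    sum_eq_of_forall_eq_one_or_eq (hent i')] at h
  simp only [Complex.add_im, Complex.mul_im, Complex.natCast_re, Complex.natCast_im,
    Complex.sub_re, Complex.sub_im, Complex.one_re, Complex.one_im] at h
  exact_mod_cast mul_right_cancel₀ him
    (by linarith : ((Finset.univ.filter fun j => H i j = 1).card : ℝ) * a.im =
      (Finset.univ.filter fun j => H i' j = 1).card * a.im)

end IsCHadamard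

theorem stmt5 (n : ℕ) (a : ℂ) (ha : ‖a‖ = 1) (ha1 : a ≠ -1)
    (H : Matrix (Fin n) (Fin n) ℂ) (hHad : IsCHadamard H)
    (hent : ∀ i j, H i j = 1 ∨ H i j = a) :
    (∀ i i', (Finset.univ.filter fun j => H i j = 1).card =
      (Finset.univ.filter fun j => H i' j = 1).card) ∧ IsRegularCH H := by
  have hcard : ∀ i i', (Finset.univ.filter fun j => H i j = 1).card =
      (Finset.univ.filter fun j => H i' j = 1).card := by
    rcases eq_or_ne a.im 0 with him | him
    · obtain rfl := Complex.eq_one_of_norm_eq_one_of_im_eq_zero ha him ha1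
      simp [fun i j => or_self_iff.mp (hent i j)]
    · exact hHad.card_filter_eq_one_eq hent him
  refine ⟨hcard, fun i i' => ?_⟩
  rw [sum_eq_of_forall_eq_one_or_eq (hent i), sum_eq_of_forall_eq_one_or_eq (hent i'), hcard i i']
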